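/- Let z⁽¹⁾,…,z⁽ᵐ⁾ ∈ Dⁿ(X) with z⁽ʲ⁾ = (z_{1j},…,z_{nj}), and let a₁,…,a_m ∈ 𝔄 with Σⱼ ‖aⱼ‖ ≤ 1. Then μ*ₙ(Σⱼ z_{1j}aⱼ, …, Σⱼ z_{nj}aⱼ) ≤ 1. Moreover, the set {(y₁,…,yₙ) ∈ Xⁿ : μ*ₙ(y₁,…,yₙ) ≤ 1} is closed in Xⁿ with respect to the norm topology (i.e. if Σᵢ‖yᵢ⁽ᵏ⁾ − yᵢ‖ → 0 and μ*ₙ(y⁽ᵏ⁾) ≤ 1 for all k, then μ*ₙ(y) ≤ 1). -/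

import Mathlib

open scoped RightActions

/-- The December 2024 Mathlib `CStarModule` (right `A`-action through `Aᵐᵒᵖ`), restated because
Mathlib's `CStarModule` now uses a left action `SMul A E` with different axioms. -/
class CStarModule' (A : outParam <| Type*) (E : Type*) [NonUnitalSemiring A] [StarRing A]
    [Module ℂ A] [AddCommGroup E] [Module ℂ E] [PartialOrder A] [SMul Aᵐᵒᵖ E] [Norm A] [Norm E]
    extends Inner A E where
  inner_add_right {x} {y} {z} : inner x (y + z) = inner x y + inner x z
  inner_self_nonneg {x} : 0 ≤ inner x x
  inner_self {x} : inner x x = 0 ↔ x = 0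
  inner_op_smul_right {a : A} {x y : E} : inner x (y <• a) = inner x y * a
  inner_smul_right_complex {z : ℂ} {x} {y} : inner x (z • y) = z • inner x y
  star_inner x y : star (inner x y) = inner y x
  norm_eq_sqrt_norm_inner_self x : ‖x‖ = √‖inner x x‖

namespace CStarModule'

variable {A E : Type*} [NonUnitalCStarAlgebra A] [PartialOrder A] [StarOrderedRing A]
  [NormedAddCommGroup E] [Module ℂ E] [SMul Aᵐᵒᵖ E] [CStarModule' A E]

lemma inner_add_left {x y z : E} : inner A (x + y) z = inner A x z + inner A y z := by
  rw [← star_star (r := inner A (x + y) z)]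
  simp only [inner_add_right, star_add, star_inner]

lemma inner_op_smul_left {a : A} {x y : E} :
    inner A (x <• a) y = star a * inner A x y := by
  rw [← star_inner, inner_op_smul_right, star_mul, star_inner]

lemma inner_zero_left {y : E} : inner A (0 : E) y = 0 := by
  have := inner_add_left (A := A) (x := (0 : E)) (y := 0) (z := y)
  rw [add_zero] at this
  simpa using this

lemma inner_zero_right {x : E} : inner A x (0 : E) = 0 := by
  rw [← star_inner, inner_zero_left, star_zero]

lemma inner_sub_right {x y z : E} : inner A x (y - z) = inner A x y - inner A x z := by
  rw [eq_sub_iff_add_eq, ← inner_add_right, sub_add_cancel]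

lemma inner_sub_left {x y z : E} : inner A (x - y) z = inner A x z - inner A y z := by
  rw [eq_sub_iff_add_eq, ← inner_add_left, sub_add_cancel]

lemma inner_sum_left {ι : Type*} {s : Finset ι} {x : ι → E} {y : E} :
    inner A (∑ i ∈ s, x i) y = ∑ i ∈ s, inner A (x i) y :=
  map_sum (AddMonoidHom.mk' (fun u : E => inner A u y) fun _ _ => inner_add_left) x s

lemma inner_sum_right {ι : Type*} {s : Finset ι} {x : E} {y : ι → E} :
    inner A x (∑ i ∈ s, y i) = ∑ i ∈ s, inner A x (y i) :=
  map_sum (AddMonoidHom.mk' (fun u : E => inner A x u) fun _ _ => inner_add_right) y s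

lemma inner_smul_right_ofReal {r : ℝ} {x y : E} :
    inner A x ((r : ℂ) • y) = r • inner A x y := by
  rw [inner_smul_right_complex, Complex.coe_smul]

lemma inner_smul_left_ofReal {r : ℝ} {x y : E} :
    inner A ((r : ℂ) • x) y = r • inner A x y := by
  rw [← star_inner, inner_smul_right_complex, star_smul, star_inner, Complex.star_def,
    Complex.conj_ofReal, Complex.coe_smul]

lemma norm_sq_eq {x : E} : ‖x‖ ^ 2 = ‖inner A x x‖ := by
  rw [norm_eq_sqrt_norm_inner_self (A := A), Real.sq_sqrt (norm_nonneg _)]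

lemma inner_swap_mul_inner_le {x y : E} :
    inner A y x * inner A x y ≤ ‖x‖ ^ 2 • inner A y y := by
  rcases eq_or_ne x 0 with h | h
  · subst h; simp [inner_zero_left, inner_zero_right]
  · have ht : 0 < ‖x‖ ^ 2 := by have := norm_pos_iff.mpr h; positivity
    obtain ⟨a, ha⟩ : ∃ a, a = inner A x y := ⟨_, rfl⟩
    have hsa : star a = inner A y x := by rw [ha, star_inner]
    have h0 : (0 : A) ≤ inner A (x <• a - ((‖x‖ ^ 2 : ℝ) : ℂ) • y)
        (x <• a - ((‖x‖ ^ 2 : ℝ) : ℂ) • y) := inner_self_nonneg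
    have hexp : inner A (x <• a - ((‖x‖ ^ 2 : ℝ) : ℂ) • y)
        (x <• a - ((‖x‖ ^ 2 : ℝ) : ℂ) • y) = star a * inner A x x * a
          - (‖x‖ ^ 2) • (star a * a) - (‖x‖ ^ 2) • (star a * a)
          + (‖x‖ ^ 2) • (‖x‖ ^ 2) • inner A y y := by
      rw [inner_sub_left, inner_sub_right, inner_sub_right, inner_op_smul_left,
        inner_op_smul_left, inner_op_smul_right, inner_smul_right_ofReal,
        inner_smul_left_ofReal, inner_smul_left_ofReal, inner_op_smul_right,
        inner_smul_right_ofReal, ← ha, ← hsa, mul_smul_comm, mul_assoc]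
      abel
    have h1 : star a * inner A x x * a ≤ (‖x‖ ^ 2) • (star a * a) := by
      calc _ ≤ ‖inner A x x‖ • (star a * a) :=
            CStarAlgebra.star_left_conjugate_le_norm_smul (isSelfAdjoint_iff.mpr (star_inner x x))
        _ = (‖x‖ ^ 2) • (star a * a) := by rw [← norm_sq_eq]
    rw [hexp] at h0
    have h2 : (0 : A) ≤ (‖x‖ ^ 2) • (star a * a) - (‖x‖ ^ 2) • (star a * a)
        - (‖x‖ ^ 2) • (star a * a) + (‖x‖ ^ 2) • (‖x‖ ^ 2) • inner A y y :=
      le_trans h0 (by gcongr)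
    have h3 : (0 : A) ≤ (‖x‖ ^ 2) • ((‖x‖ ^ 2) • inner A y y - star a * a) := by
      rw [smul_sub]
      convert h2 using 1
      abel
    have h4 := smul_nonneg (inv_nonneg.mpr ht.le) h3
    rw [smul_smul, inv_mul_cancel₀ ht.ne', one_smul] at h4
    rw [← hsa, ← ha]
    exact sub_nonneg.mp h4

variable (E) in
lemma norm_inner_le {x y : E} : ‖inner A x y‖ ≤ ‖x‖ * ‖y‖ := by
  have := calc ‖inner A x y‖ ^ 2 = ‖inner A y x * inner A x y‖ := by
                rw [← star_inner x y, CStarRing.norm_star_mul_self, pow_two]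
    _ ≤ ‖‖x‖ ^ 2 • inner A y y‖ := by
                refine CStarAlgebra.norm_le_norm_of_nonneg_of_le ?_ inner_swap_mul_inner_le
                rw [← star_inner x y]
                exact star_mul_self_nonneg _
    _ = ‖x‖ ^ 2 * ‖inner A y y‖ := by
                rw [norm_smul, Real.norm_eq_abs, abs_of_nonneg (by positivity)]
    _ = (‖x‖ * ‖y‖) ^ 2 := by rw [← norm_sq_eq (x := y)]; ring
  exact (pow_le_pow_iff_left₀ (norm_nonneg _) (by positivity) (by norm_num)).mp this

end CStarModule'

variable (A : Type*) {E : Type*} [NonUnitalCStarAlgebra A] [PartialOrder A] [StarOrderedRing A]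
  [NormedAddCommGroup E] [Module ℂ E] [SMul Aᵐᵒᵖ E] [CStarModule' A E]

/-- `μ*ₙ(y₁,…,yₙ) = sup { ‖(Σᵢ |⟨yᵢ,z⟩|²)^{1/2}‖ : z ∈ X, ‖z‖ ≤ 1 }`. -/
noncomputable def mustar (n : ℕ) (y : Fin n → E) : ℝ :=
  sSup {r : ℝ | ∃ z : E, ‖z‖ ≤ 1 ∧
    r = Real.sqrt ‖∑ i, star (inner A (y i) z : A) * (inner A (y i) z : A)‖}

/-- `Dⁿ(X)`: the set of mutually orthogonal `n`-tuples `(v₁,…,vₙ)` in `X` such that each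
`⟨vᵢ,vᵢ⟩` is a projection in `𝔄`. -/
def Dn (n : ℕ) : Set (Fin n → E) :=
  {v | (∀ i j, i ≠ j → (inner A (v i) (v j) : A) = 0) ∧
    ∀ i, IsSelfAdjoint (inner A (v i) (v i) : A) ∧
      IsIdempotentElem (inner A (v i) (v i) : A)}

set_option linter.unusedSectionVars false

section Aux

variable {A}

/-- `√‖∑ᵢ |bᵢ|²‖` as a function of `b : Fin n → A`. -/
noncomputable def gA {A : Type*} [NonUnitalCStarAlgebra A] [PartialOrder A] [StarOrderedRing A]
    (n : ℕ) (b : Fin n → A) : ℝ := Real.sqrt ‖∑ i, star (b i) * b i‖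

lemma gA_eq (n : ℕ) (b : Fin n → A) :
    gA n b = ‖(WithCStarModule.equiv A (Fin n → A)).symm (fun i => star (b i))‖ := by
  rw [WithCStarModule.pi_norm]
  unfold gA
  congr 2
  refine Finset.sum_congr rfl fun i _ => ?_
  show star (b i) * b i = star (b i) * star (star (b i))
  rw [star_star]

lemma gA_sum_le {m n : ℕ} (b : Fin m → Fin n → A) :
    gA n (∑ j, b j) ≤ ∑ j, gA n (b j) := by
  simp only [gA_eq]
  have : (WithCStarModule.equiv A (Fin n → A)).symm (fun i => star ((∑ j, b j) i))
      = ∑ j, (WithCStarModule.equiv A (Fin n → A)).symm (fun i => star (b j i)) := by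
    have h := map_sum (WithCStarModule.addEquiv A (Fin n → A)).symm
      (fun j i => star (b j i)) Finset.univ
    refine Eq.trans ?_ h
    show (fun i => star ((∑ j, b j) i)) = ∑ j, fun i => star (b j i)
    ext i
    simp [Finset.sum_apply, star_sum]
  rw [this]
  exact norm_sum_le _ _

lemma gA_le_sum_norm (n : ℕ) (b : Fin n → A) : gA n b ≤ ∑ i, ‖b i‖ := by
  rw [gA_eq]
  exact (WithCStarModule.pi_norm_le_sum_norm _).trans
    (le_of_eq (Finset.sum_congr rfl fun i _ => norm_star (b i)))

lemma gA_smul (n : ℕ) (a : A) (b : Fin n → A) :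
    gA n (fun i => star a * b i) ≤ ‖a‖ * gA n b := by
  unfold gA
  have h1 : ∀ i : Fin n, star (star a * b i) * (star a * b i)
      = star (b i) * (a * star a) * b i := by
    intro i; simp [star_mul, mul_assoc]
  have h2 : ∑ i, star (star a * b i) * (star a * b i)
      ≤ (‖a‖ ^ 2) • ∑ i, star (b i) * b i := by
    rw [Finset.smul_sum]
    refine Finset.sum_le_sum fun i _ => ?_
    rw [h1 i]
    calc star (b i) * (a * star a) * b i
        ≤ ‖a * star a‖ • (star (b i) * b i) :=
          CStarAlgebra.star_left_conjugate_le_norm_smul (IsSelfAdjoint.mul_star_self a)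
      _ = (‖a‖ ^ 2) • (star (b i) * b i) := by
          rw [CStarRing.norm_self_mul_star, sq]
  have h3 : ‖∑ i, star (star a * b i) * (star a * b i)‖
      ≤ ‖(‖a‖ ^ 2) • ∑ i, star (b i) * b i‖ := by
    refine CStarAlgebra.norm_le_norm_of_nonneg_of_le ?_ h2
    exact Finset.sum_nonneg fun i _ => star_mul_self_nonneg _
  calc Real.sqrt ‖∑ i, star (star a * b i) * (star a * b i)‖
      ≤ Real.sqrt ‖(‖a‖ ^ 2) • ∑ i, star (b i) * b i‖ := Real.sqrt_le_sqrt h3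
    _ = ‖a‖ * Real.sqrt ‖∑ i, star (b i) * b i‖ := by
        rw [norm_smul, Real.norm_eq_abs, abs_of_nonneg (by positivity),
          Real.sqrt_mul (by positivity), Real.sqrt_sq (norm_nonneg a)]

/-- `v <• ⟪v,v⟫ = v` when `⟪v,v⟫` is a projection. -/
lemma smul_proj_self {v : E} (hsa : IsSelfAdjoint (inner A v v : A))
    (hid : IsIdempotentElem (inner A v v : A)) :
    MulOpposite.op (inner A v v : A) • v = v := by
  set p : A := inner A v v with hp
  rw [← sub_eq_zero, ← CStarModule'.inner_self (A := A)]
  have h1 : (inner A (MulOpposite.op p • v) (MulOpposite.op p • v) : A) = p := by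
    rw [CStarModule'.inner_op_smul_left, CStarModule'.inner_op_smul_right, ← hp,
      hsa.star_eq, hid.eq, hid.eq]
  have h2 : (inner A (MulOpposite.op p • v) v : A) = p := by
    rw [CStarModule'.inner_op_smul_left, ← hp, hsa.star_eq, hid.eq]
  have h3 : (inner A v (MulOpposite.op p • v) : A) = p := by
    rw [CStarModule'.inner_op_smul_right, ← hp, hid.eq]
  rw [CStarModule'.inner_sub_left, CStarModule'.inner_sub_right,
    CStarModule'.inner_sub_right, h1, h2, h3, ← hp]
  abel

/-- For `z ∈ Dⁿ` and `‖z'‖ ≤ 1`, `‖∑ᵢ |⟪zᵢ,z'⟫|²‖ ≤ 1`. -/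
lemma norm_sum_inner_le_one {n : ℕ} {z : Fin n → E} (hz : z ∈ Dn A n)
    {z' : E} (hz' : ‖z'‖ ≤ 1) :
    ‖∑ i, star (inner A (z i) z' : A) * (inner A (z i) z' : A)‖ ≤ 1 := by
  obtain ⟨horth, hproj⟩ := hz
  set c : Fin n → A := fun i => inner A (z i) z' with hc
  set w : E := ∑ i, MulOpposite.op (c i) • z i with hw
  set S : A := ∑ i, star (c i) * c i with hS
  have hpc : ∀ i, (inner A (z i) (z i) : A) * c i = c i := by
    intro i
    have := smul_proj_self (hproj i).1 (hproj i).2 (v := z i)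
    calc (inner A (z i) (z i) : A) * c i
        = star (inner A (z i) (z i) : A) * (inner A (z i) z' : A) := by
          rw [(hproj i).1.star_eq]
      _ = (inner A (MulOpposite.op (inner A (z i) (z i) : A) • z i) z' : A) := by
          rw [CStarModule'.inner_op_smul_left]
      _ = c i := by rw [this]
  have hwz : (inner A w z' : A) = S := by
    rw [hw, CStarModule'.inner_sum_left, hS]
    exact Finset.sum_congr rfl fun i _ => by rw [CStarModule'.inner_op_smul_left]
  have hww : (inner A w w : A) = S := by
    rw [hw, CStarModule'.inner_sum_left]
    have key : ∀ i : Fin n, (inner A (MulOpposite.op (c i) • z i) w : A)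
        = star (c i) * c i := by
      intro i
      rw [CStarModule'.inner_op_smul_left, hw, CStarModule'.inner_sum_right]
      have : ∀ j : Fin n, (inner A (z i) (MulOpposite.op (c j) • z j) : A)
          = if j = i then (inner A (z i) (z i) : A) * c i else 0 := by
        intro j
        rw [CStarModule'.inner_op_smul_right]
        by_cases h : j = i
        · subst h; simp
        · rw [horth i j (fun h' => h h'.symm), zero_mul, if_neg h]
      rw [Finset.sum_congr rfl fun j _ => this j,
        Finset.sum_ite_eq' _ i, if_pos (Finset.mem_univ i), hpc i]
    rw [hS]
    exact Finset.sum_congr rfl fun i _ => key i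
  have hSnorm : ‖S‖ = ‖w‖ ^ 2 := by rw [← hww, ← CStarModule'.norm_sq_eq]
  have hle : ‖S‖ ≤ ‖w‖ * ‖z'‖ := by rw [← hwz]; exact CStarModule'.norm_inner_le E
  have hw1 : ‖w‖ ≤ 1 := by
    rcases le_or_gt ‖w‖ 1 with h | h
    · exact h
    · exfalso
      have h0 : (0:ℝ) < ‖w‖ := lt_trans one_pos h
      have : ‖w‖ ^ 2 ≤ ‖w‖ * 1 := le_trans (hSnorm ▸ hle)
        (by nlinarith [norm_nonneg w])
      nlinarith
  calc ‖S‖ ≤ ‖w‖ * ‖z'‖ := hle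
    _ ≤ 1 * 1 := mul_le_mul hw1 hz' (norm_nonneg _) zero_le_one
    _ = 1 := one_mul 1

/-- continuity of `y ↦ ⟪y, z'⟫`. -/
lemma continuous_inner_left (z' : E) : Continuous fun x : E => (inner A x z' : A) := by
  have : LipschitzWith ‖z'‖₊ fun x : E => (inner A x z' : A) := by
    refine LipschitzWith.of_dist_le_mul fun x y => ?_
    rw [dist_eq_norm, dist_eq_norm, ← CStarModule'.inner_sub_left]
    calc ‖(inner A (x - y) z' : A)‖ ≤ ‖x - y‖ * ‖z'‖ := CStarModule'.norm_inner_le E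
      _ = ‖z'‖₊ * ‖x - y‖ := by rw [mul_comm]; rfl
  exact this.continuous

lemma mustar_le_one_iff {n : ℕ} (y : Fin n → E) :
    mustar A n y ≤ 1 ↔ ∀ z : E, ‖z‖ ≤ 1 →
      Real.sqrt ‖∑ i, star (inner A (y i) z : A) * (inner A (y i) z : A)‖ ≤ 1 := by
  constructor
  · intro h z hz
    have hbdd : BddAbove {r : ℝ | ∃ z : E, ‖z‖ ≤ 1 ∧
        r = Real.sqrt ‖∑ i, star (inner A (y i) z : A) * (inner A (y i) z : A)‖} := by
      refine ⟨∑ i, ‖y i‖, ?_⟩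
      rintro r ⟨w, hw, rfl⟩
      refine le_trans (gA_le_sum_norm n (fun i => (inner A (y i) w : A))) ?_
      refine Finset.sum_le_sum fun i _ => ?_
      calc ‖(inner A (y i) w : A)‖ ≤ ‖y i‖ * ‖w‖ := CStarModule'.norm_inner_le E
        _ ≤ ‖y i‖ * 1 := mul_le_mul_of_nonneg_left hw (norm_nonneg _)
        _ = ‖y i‖ := mul_one _
    exact le_trans (le_csSup hbdd ⟨z, hz, rfl⟩) h
  · intro h
    refine Real.sSup_le ?_ zero_le_one
    rintro r ⟨z, hz, rfl⟩
    exact h z hz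

end Aux

/-- Tuples `Σⱼ z⁽ʲ⁾aⱼ` with `z⁽ʲ⁾ ∈ Dⁿ(X)` and `Σⱼ ‖aⱼ‖ ≤ 1` satisfy `μ*ₙ ≤ 1`; moreover the
set `{y : μ*ₙ(y) ≤ 1}` is closed in `Xⁿ` for the norm topology. -/
theorem mustar_le_one_of_acoD_and_isClosed [CompleteSpace E] (n : ℕ) :
    (∀ (m : ℕ) (z : Fin m → Fin n → E) (a : Fin m → A),
      (∀ j, z j ∈ Dn A n) → (∑ j, ‖a j‖) ≤ 1 →
      mustar A n (fun i => ∑ j, MulOpposite.op (a j) • z j i) ≤ 1) ∧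
    IsClosed {y : Fin n → E | mustar A n y ≤ 1} := by
  constructor
  · intro m z a hz ha
    rw [mustar_le_one_iff]
    intro z' hz'
    have hb : (fun i => (inner A (∑ j, MulOpposite.op (a j) • z j i) z' : A))
        = ∑ j, (fun i => star (a j) * (inner A (z j i) z' : A)) := by
      funext i
      rw [CStarModule'.inner_sum_left, Finset.sum_apply]
      exact Finset.sum_congr rfl fun j _ => CStarModule'.inner_op_smul_left
    show gA n (fun i => (inner A (∑ j, MulOpposite.op (a j) • z j i) z' : A)) ≤ 1
    rw [hb]
    calc gA n (∑ j, fun i => star (a j) * (inner A (z j i) z' : A))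
        ≤ ∑ j, gA n (fun i => star (a j) * (inner A (z j i) z' : A)) := gA_sum_le _
      _ ≤ ∑ j, ‖a j‖ * gA n (fun i => (inner A (z j i) z' : A)) :=
          Finset.sum_le_sum fun j _ => gA_smul n (a j) _
      _ ≤ ∑ j, ‖a j‖ * 1 := by
          refine Finset.sum_le_sum fun j _ => ?_
          refine mul_le_mul_of_nonneg_left ?_ (norm_nonneg _)
          unfold gA
          rw [show (1:ℝ) = Real.sqrt 1 from (Real.sqrt_one).symm]
          exact Real.sqrt_le_sqrt (norm_sum_inner_le_one (hz j) hz')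
      _ = ∑ j, ‖a j‖ := by simp
      _ ≤ 1 := ha
  · have : {y : Fin n → E | mustar A n y ≤ 1}
        = ⋂ (z : E) (_ : ‖z‖ ≤ 1),
          {y : Fin n → E |
            Real.sqrt ‖∑ i, star (inner A (y i) z : A) * (inner A (y i) z : A)‖ ≤ 1} := by
      ext y
      simp only [Set.mem_setOf_eq, Set.mem_iInter]
      exact mustar_le_one_iff y
    rw [this]
    refine isClosed_iInter fun z => isClosed_iInter fun _ => ?_
    have hcont : Continuous fun y : Fin n → E =>
        Real.sqrt ‖∑ i, star (inner A (y i) z : A) * (inner A (y i) z : A)‖ := by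
      refine Real.continuous_sqrt.comp (continuous_norm.comp ?_)
      refine continuous_finset_sum _ fun i _ => ?_
      have h1 : Continuous fun y : Fin n → E => (inner A (y i) z : A) :=
        (continuous_inner_left z).comp (continuous_apply i)
      exact (h1.star).mul h1
    exact IsClosed.preimage hcont isClosed_Iic
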